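/- Let u, ε, h be positive reals, q₁, q₃ real with q₃ < 2k, τ ≥ 0, and k a positive natural number, with 1 ± (-1)^k·τ·2^{q₃-2k}·h^{2k-q₃} ≠ 0. Then the unique real γ solving u·ε·(2/h)^{q₁} + γ·((-1)^k·(2/h)^{2k} ± τ·(2/h)^{q₃}) = 0 is γ = (-1)^{1-k}·u·ε·2^{q₁-2k}·h^{2k-q₁} / (1 ± (-1)^k·τ·2^{q₃-2k}·h^{2k-q₃}). Moreover, as h → 0 this γ converges to 0 (for q₁ < 2k). -/

import Mathlib

open Real Filter Topology

/-! Both symbols are multiples of the leading mode `(2/h)^(2k)`: with `m = (-1)^k` and `m² = 1`,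
`m·(2/h)^(2k) ± τ·(2/h)^{q₃} = m·(2/h)^(2k)·D(h)` where `D(h) = 1 ± m·τ·2^{q₃-2k}·h^{2k-q₃}`, and
`(2/h)^{q₁} = (2/h)^(2k)·2^{q₁-2k}·h^{2k-q₁}`. Dividing out the common factor gives `γ`; as `h → 0⁺`
the numerator vanishes like `h^{2k-q₁}` while `D(h) → 1` because `q₃ < 2k`. -/

lemma div_rpow_eq_div_rpow_mul {c h : ℝ} (hc : 0 < c) (hh : 0 < h) (a b : ℝ) :
    (c / h) ^ a = (c / h) ^ b * (c ^ (a - b) * h ^ (b - a)) := by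
  rw [← neg_sub a b, Real.rpow_neg hh.le, ← div_eq_mul_inv, ← Real.div_rpow hc.le hh.le,
    ← Real.rpow_add (div_pos hc hh), add_sub_cancel]

lemma add_mul_eq_zero_iff_eq_neg_div {A B γ : ℝ} (hB : B ≠ 0) :
    A + γ * B = 0 ↔ γ = -A / B := by
  rw [eq_div_iff hB, add_comm, add_eq_zero_iff_eq_neg]

lemma tendsto_const_mul_rpow_nhdsGT_zero (c : ℝ) {p : ℝ} (hp : 0 < p) :
    Tendsto (fun h : ℝ => c * h ^ p) (𝓝[>] 0) (𝓝 0) := by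
  have hcont := (Real.continuousAt_rpow_const 0 p (Or.inr hp.le)).tendsto
  rw [Real.zero_rpow hp.ne'] at hcont
  simpa using (hcont.const_mul c).mono_left nhdsWithin_le_nhds

theorem hyperviscosity_gamma_spurious_hyp_general (u ε τ q₁ q₃ : ℝ) (k : ℕ) (s : ℝ)
    (hq₃ : q₃ < 2 * k) :
    (∀ h : ℝ, 0 < h →
      1 + s * (-1 : ℝ) ^ k * τ * (2 : ℝ) ^ (q₃ - 2 * k) * h ^ (2 * k - q₃) ≠ 0 →
      ∀ γ : ℝ,
        u * ε * (2 / h) ^ q₁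
            + γ * ((-1 : ℝ) ^ k * (2 / h) ^ ((2 * k : ℕ) : ℝ)
              + s * τ * (2 / h) ^ q₃) = 0 ↔
          γ = (-1 : ℝ) ^ (k + 1) * u * ε * (2 : ℝ) ^ (q₁ - 2 * k) * h ^ (2 * k - q₁) /
              (1 + s * (-1 : ℝ) ^ k * τ * (2 : ℝ) ^ (q₃ - 2 * k) * h ^ (2 * k - q₃))) ∧
    (q₁ < 2 * k →
      Tendsto (fun h : ℝ =>
          (-1 : ℝ) ^ (k + 1) * u * ε * (2 : ℝ) ^ (q₁ - 2 * k) * h ^ (2 * k - q₁) /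
            (1 + s * (-1 : ℝ) ^ k * τ * (2 : ℝ) ^ (q₃ - 2 * k) * h ^ (2 * k - q₃)))
        (𝓝[>] (0 : ℝ)) (𝓝 0)) := by
  refine ⟨fun h hh hD γ => ?_, fun hq₁ => ?_⟩
  · set m : ℝ := (-1) ^ k
    set X : ℝ := (2 / h) ^ (2 * k : ℝ)
    have hm : m * m = 1 := by rw [← sq, ← pow_mul, mul_comm, pow_mul]; norm_num
    have hX : X ≠ 0 := (Real.rpow_pos_of_pos (div_pos two_pos hh) _).ne'
    have hmXD : m * X * (1 + s * m * τ * (2 : ℝ) ^ (q₃ - 2 * k) * h ^ (2 * k - q₃)) ≠ 0 :=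
      mul_ne_zero (mul_ne_zero (by simp [m]) hX) hD
    have hsymbol : m * (2 / h) ^ ((2 * k : ℕ) : ℝ) + s * τ * (2 / h) ^ q₃ =
        m * X * (1 + s * m * τ * (2 : ℝ) ^ (q₃ - 2 * k) * h ^ (2 * k - q₃)) := by
      rw [div_rpow_eq_div_rpow_mul two_pos hh q₃ (2 * k)]
      push_cast
      linear_combination (-s * τ * X * (2 : ℝ) ^ (q₃ - 2 * k) * h ^ (2 * k - q₃)) * hm
    have hgamma : -(u * ε * (2 / h) ^ q₁) /
        (m * X * (1 + s * m * τ * (2 : ℝ) ^ (q₃ - 2 * k) * h ^ (2 * k - q₃))) =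
        (-1 : ℝ) ^ (k + 1) * u * ε * (2 : ℝ) ^ (q₁ - 2 * k) * h ^ (2 * k - q₁) /
          (1 + s * m * τ * (2 : ℝ) ^ (q₃ - 2 * k) * h ^ (2 * k - q₃)) := by
      rw [div_rpow_eq_div_rpow_mul two_pos hh q₁ (2 * k), pow_succ, div_eq_div_iff hmXD hD]
      linear_combination (u * ε * X * (2 : ℝ) ^ (q₁ - 2 * k) * h ^ (2 * k - q₁) *
        (1 + s * m * τ * (2 : ℝ) ^ (q₃ - 2 * k) * h ^ (2 * k - q₃))) * hm
    rw [hsymbol, add_mul_eq_zero_iff_eq_neg_div hmXD, hgamma]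
  · have hnum := tendsto_const_mul_rpow_nhdsGT_zero ((-1 : ℝ) ^ (k + 1) * u * ε * 2 ^ (q₁ - 2 * k))
      (sub_pos.2 hq₁)
    have hden := (tendsto_const_mul_rpow_nhdsGT_zero (s * (-1 : ℝ) ^ k * τ * 2 ^ (q₃ - 2 * k))
      (sub_pos.2 hq₃)).const_add 1
    simpa [Pi.div_def] using hnum.div hden (by norm_num)

/-- Hyperviscosity coefficient when the discrete hyperviscosity operator itself
has a spurious mode `±τ·k̂^{q₃}` (sign `s = ±1`): the unique real `γ` cancelling
the advection growth mode is
`γ = (-1)^{1-k}·u·ε·2^{q₁-2k}·h^{2k-q₁} / (1 + s·(-1)^k·τ·2^{q₃-2k}·h^{2k-q₃})`,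
and (for `q₁ < 2k`) this `γ` tends to `0` as `h → 0⁺`. -/
theorem hyperviscosity_gamma_spurious_hyp (u ε τ q₁ q₃ : ℝ) (k : ℕ) (s : ℝ)
    (hu : 0 < u) (hε : 0 < ε) (hτ : 0 ≤ τ) (hk : 0 < k)
    (hq₃ : q₃ < 2 * k) (hs : s = 1 ∨ s = -1) :
    (∀ h : ℝ, 0 < h →
      1 + s * (-1 : ℝ) ^ k * τ * (2 : ℝ) ^ (q₃ - 2 * k) * h ^ (2 * k - q₃) ≠ 0 →
      ∀ γ : ℝ,
        u * ε * (2 / h) ^ q₁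
            + γ * ((-1 : ℝ) ^ k * (2 / h) ^ ((2 * k : ℕ) : ℝ)
              + s * τ * (2 / h) ^ q₃) = 0 ↔
          γ = (-1 : ℝ) ^ (k + 1) * u * ε * (2 : ℝ) ^ (q₁ - 2 * k) * h ^ (2 * k - q₁) /
              (1 + s * (-1 : ℝ) ^ k * τ * (2 : ℝ) ^ (q₃ - 2 * k) * h ^ (2 * k - q₃))) ∧
    (q₁ < 2 * k →
      Tendsto (fun h : ℝ =>
          (-1 : ℝ) ^ (k + 1) * u * ε * (2 : ℝ) ^ (q₁ - 2 * k) * h ^ (2 * k - q₁) /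
            (1 + s * (-1 : ℝ) ^ k * τ * (2 : ℝ) ^ (q₃ - 2 * k) * h ^ (2 * k - q₃)))
        (𝓝[>] (0 : ℝ)) (𝓝 0)) :=
  hyperviscosity_gamma_spurious_hyp_general u ε τ q₁ q₃ k s hq₃
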